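/- arXiv:2212.13474 — 3 statements merged into one kernel-verified Lean document; each statement's English description precedes it below -/
import Mathlib

section
/- For a block matrix M = [[A, B], [C, D]] with A invertible, the rank of M equals the rank of the Schur complement M/A plus the rank of A (Guttman rank additivity formula). -/
open Matrix

lemma finrank_submodule_prod {K M N : Type*} [Field K] [AddCommGroup M] [Module K M]
    [AddCommGroup N] [Module K N] [FiniteDimensional K M] [FiniteDimensional K N] (p : Submodule K M) (q : Submodule K N) :
    Module.finrank K (p.prod q) = Module.finrank K p + Module.finrank K q := by
  have e : (p.prod q) ≃ₗ[K] p × q :=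
    { toFun := fun x => (⟨x.1.1, x.2.1⟩, ⟨x.1.2, x.2.2⟩)
      map_add' := fun _ _ => rfl
      map_smul' := fun _ _ => rfl
      invFun := fun x => ⟨(x.1.1, x.2.1), ⟨x.1.2, x.2.2⟩⟩
      left_inv := fun _ => rfl
      right_inv := fun _ => rfl }
  rw [e.finrank_eq, Module.finrank_prod]

lemma rank_fromBlocks_diag {n m K : Type*} [Fintype n] [Fintype m]
    [DecidableEq n] [DecidableEq m] [Field K]
    (A : Matrix n n K) (D : Matrix m m K) :
    (Matrix.fromBlocks A 0 0 D).rank = A.rank + D.rank := by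
  have hrange : LinearMap.range (Matrix.fromBlocks A 0 0 D).mulVecLin =
      Submodule.map (LinearEquiv.sumArrowLequivProdArrow n m K K).symm.toLinearMap
        ((LinearMap.range A.mulVecLin).prod (LinearMap.range D.mulVecLin)) := by
    ext y
    simp only [LinearMap.mem_range, Submodule.mem_map, Submodule.mem_prod,
      mulVecLin_apply]
    constructor
    · rintro ⟨x, rfl⟩
      refine ⟨(A.mulVec (x ∘ Sum.inl), D.mulVec (x ∘ Sum.inr)),
        ⟨⟨_, rfl⟩, ⟨_, rfl⟩⟩, ?_⟩
      rw [fromBlocks_mulVec]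
      simp only [zero_mulVec, add_zero, zero_add]
      rfl
    · rintro ⟨⟨u, v⟩, ⟨⟨a, rfl⟩, ⟨b, rfl⟩⟩, rfl⟩
      refine ⟨Sum.elim a b, ?_⟩
      rw [fromBlocks_mulVec]
      simp only [zero_mulVec, add_zero, zero_add]
      rfl
  rw [Matrix.rank, hrange, LinearEquiv.finrank_map_eq, finrank_submodule_prod,
    Matrix.rank, Matrix.rank]

/-- Guttman rank additivity: for a block matrix M = [[A,B],[C,D]] with A invertible,
rank M = rank(M/A) + rank A, where M/A = D - C A⁻¹ B. -/
theorem guttman_rank_additivity {n m K : Type*} [Fintype n] [Fintype m]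
    [DecidableEq n] [DecidableEq m] [Field K]
    (A : Matrix n n K) (B : Matrix n m K) (C : Matrix m n K) (D : Matrix m m K)
    (hA : IsUnit A.det) :
    (Matrix.fromBlocks A B C D).rank = (D - C * A⁻¹ * B).rank + A.rank := by
  haveI := A.invertibleOfIsUnitDet hA
  have hinv : ⅟A = A⁻¹ := invOf_eq_nonsing_inv A
  rw [Matrix.fromBlocks_eq_of_invertible₁₁ A B C D]
  have h1 : IsUnit (Matrix.fromBlocks (1 : Matrix n n K) 0 (C * ⅟A) 1).det := by
    rw [det_fromBlocks_zero₁₂]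
    simp
  have h2 : IsUnit (Matrix.fromBlocks (1 : Matrix n n K) (⅟A * B) 0 1).det := by
    rw [det_fromBlocks_zero₂₁]
    simp
  rw [rank_mul_eq_left_of_isUnit_det _ _ h2, rank_mul_eq_right_of_isUnit_det _ _ h1,
    rank_fromBlocks_diag, hinv, add_comm]
end

section
/- For any positive parameters k₁, k₂ and positive constants c₀₁, c₀₂, the system of equations -k₁x₁x₃ + k₂x₂ = 0, x₁ + x₂ = c₀₁, x₂ + x₃ = c₀₂ has a unique solution with x₁, x₂, x₃ all positive, given explicitly by x₁ = (k₁(c₀₁-c₀₂) - k₂ + √Δ)/(2k₁), x₂ = (k₁(c₀₁+c₀₂) + k₂ - √Δ)/(2k₁), x₃ = (k₁(c₀₂-c₀₁) - k₂ + √Δ)/(2k₁), where Δ = (c₀₁-c₀₂)²k₁² + k₂² + 2k₁k₂(c₀₁+c₀₂). -/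
/-- The quasi-equilibrium equations together with the two conservation laws have a
unique positive solution, given explicitly in terms of Δ. -/
theorem michaelisMenten_unique_steady_state
    (k₁ k₂ c₀₁ c₀₂ : ℝ) (hk₁ : 0 < k₁) (hk₂ : 0 < k₂)
    (hc₁ : 0 < c₀₁) (hc₂ : 0 < c₀₂) :
    ∀ x₁ x₂ x₃ : ℝ,
      (0 < x₁ ∧ 0 < x₂ ∧ 0 < x₃ ∧
        -k₁ * x₁ * x₃ + k₂ * x₂ = 0 ∧ x₁ + x₂ = c₀₁ ∧ x₂ + x₃ = c₀₂) ↔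
      (x₁ = (k₁ * (c₀₁ - c₀₂) - k₂ +
              Real.sqrt ((c₀₁ - c₀₂)^2 * k₁^2 + k₂^2 + 2 * k₁ * k₂ * (c₀₁ + c₀₂))) / (2 * k₁) ∧
       x₂ = (k₁ * (c₀₁ + c₀₂) + k₂ -
              Real.sqrt ((c₀₁ - c₀₂)^2 * k₁^2 + k₂^2 + 2 * k₁ * k₂ * (c₀₁ + c₀₂))) / (2 * k₁) ∧
       x₃ = (k₁ * (c₀₂ - c₀₁) - k₂ +
              Real.sqrt ((c₀₁ - c₀₂)^2 * k₁^2 + k₂^2 + 2 * k₁ * k₂ * (c₀₁ + c₀₂))) / (2 * k₁)) := by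
  intro x₁ x₂ x₃
  set Δ : ℝ := (c₀₁ - c₀₂)^2 * k₁^2 + k₂^2 + 2 * k₁ * k₂ * (c₀₁ + c₀₂) with hΔ
  have hΔ0 : 0 ≤ Δ := by positivity
  set s : ℝ := Real.sqrt Δ with hs
  have hs0 : 0 ≤ s := Real.sqrt_nonneg _
  have hs2 : s ^ 2 = Δ := Real.sq_sqrt hΔ0
  have hs1 : k₁ * (c₀₁ - c₀₂) + k₂ < s := by nlinarith [mul_pos (mul_pos hk₁ hk₂) hc₂]
  have hs3 : k₁ * (c₀₂ - c₀₁) + k₂ < s := by nlinarith [mul_pos (mul_pos hk₁ hk₂) hc₁]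
  have hsb : s < k₁ * (c₀₁ + c₀₂) + k₂ := by
    nlinarith [mul_pos (mul_pos (mul_pos hk₁ hk₁) hc₁) hc₂]
  constructor
  · rintro ⟨h1, h2, h3, h4, h5, h6⟩
    have hx1 : x₁ = c₀₁ - x₂ := by linarith
    have hx3 : x₃ = c₀₂ - x₂ := by linarith
    have hq : (2 * k₁ * x₂ - (k₁ * (c₀₁ + c₀₂) + k₂) - s) *
        (2 * k₁ * x₂ - (k₁ * (c₀₁ + c₀₂) + k₂) + s) = 0 := by
      subst hx1 hx3; nlinarith [hs2]
    rcases mul_eq_zero.mp hq with h | h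
    · exfalso
      -- then 2k₁x₂ = b + s, so x₁ = (k₁(c₀₁-c₀₂) - k₂ - s)/(2k₁) ≤ 0
      nlinarith [h1, hs1]
    · have hx2 : x₂ = (k₁ * (c₀₁ + c₀₂) + k₂ - s) / (2 * k₁) := by
        field_simp; linarith
      refine ⟨?_, hx2, ?_⟩
      · rw [hx1, hx2]; field_simp; ring
      · rw [hx3, hx2]; field_simp; ring
  · rintro ⟨e1, e2, e3⟩
    subst e1 e2 e3
    have h2k : (0:ℝ) < 2 * k₁ := by linarith
    refine ⟨?_, ?_, ?_, ?_, ?_, ?_⟩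
    · apply div_pos _ h2k; linarith
    · apply div_pos _ h2k; linarith
    · apply div_pos _ h2k; linarith
    · field_simp; nlinarith [hs2]
    · field_simp; ring
    · field_simp; ring
end

section
/- For the truncated Michaelis-Menten vector field F(x) = (-k₁x₁x₃+k₂x₂, k₁x₁x₃-k₂x₂, -k₁x₁x₃+k₂x₂) and the conservation laws Φ(x) = (x₁+x₂, x₂+x₃), the Jacobian of the stacked map (F, Φ) has rank 3 at every point with x₁,x₂,x₃ > 0 and k₁,k₂ > 0 satisfying -k₁x₁x₃+k₂x₂ = 0; in particular, the 3×3 minor det(D_x(-k₁x₁x₃+k₂x₂, x₁+x₂, x₂+x₃)) = -k₂ - k₁x₁ - k₁x₃ is nonzero. -/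
/-!
The conservation laws `x₁ + x₂` and `x₂ + x₃` together with the first component of `F` form a
`3 × 3` minor of the Jacobian whose determinant `-(k₂ + k₁x₁ + k₁x₃)` is negative at every
positive point, so the `5 × 3` Jacobian has full column rank.
-/

namespace Matrix

variable {m n R : Type*} [Fintype n] [DecidableEq n] [CommRing R] [StrongRankCondition R]

theorem rank_eq_card_width_of_isUnit_det_submatrix (A : Matrix m n R) (r : n → m)
    (h : IsUnit (A.submatrix r id).det) : A.rank = Fintype.card n :=
  le_antisymm A.rank_le_card_width <|
    (rank_of_isUnit _ ((isUnit_iff_isUnit_det _).mpr h)).symm.trans_le (A.rank_submatrix_le r id)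

end Matrix

theorem michaelisMenten_minor_det (k₁ k₂ x₁ x₃ : ℝ) :
    Matrix.det
      (![![-k₁ * x₃, k₂, -k₁ * x₁],
         ![1, 1, 0],
         ![0, 1, 1]] : Matrix (Fin 3) (Fin 3) ℝ) = -k₂ - k₁ * x₁ - k₁ * x₃ := by
  refine (Matrix.det_fin_three _).trans ?_
  simp only [Matrix.cons_val', Matrix.cons_val_zero, Matrix.cons_val_one, Matrix.cons_val,
    Matrix.cons_val_fin_one]
  ring

theorem michaelisMenten_conservation_complete_general
    (k₁ k₂ x₁ x₃ : ℝ) (hk₁ : 0 < k₁) (hk₂ : 0 < k₂)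
    (hx₁ : 0 < x₁) (hx₃ : 0 < x₃) :
    (Matrix.rank
      (![![-k₁ * x₃, k₂, -k₁ * x₁],
         ![k₁ * x₃, -k₂, k₁ * x₁],
         ![-k₁ * x₃, k₂, -k₁ * x₁],
         ![1, 1, 0],
         ![0, 1, 1]] : Matrix (Fin 5) (Fin 3) ℝ) = 3) ∧
    (Matrix.det
      (![![-k₁ * x₃, k₂, -k₁ * x₁],
         ![1, 1, 0],
         ![0, 1, 1]] : Matrix (Fin 3) (Fin 3) ℝ) = -k₂ - k₁ * x₁ - k₁ * x₃) ∧
    (-k₂ - k₁ * x₁ - k₁ * x₃ ≠ 0) := by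
  have hminor_ne : -k₂ - k₁ * x₁ - k₁ * x₃ ≠ 0 := by
    have : 0 < k₂ + k₁ * x₁ + k₁ * x₃ := by positivity
    linarith
  refine ⟨?_, michaelisMenten_minor_det k₁ k₂ x₁ x₃, hminor_ne⟩
  refine (Matrix.rank_eq_card_width_of_isUnit_det_submatrix _ ![0, 3, 4] ?_).trans
    (Fintype.card_fin 3)
  rw [isUnit_iff_ne_zero]
  convert (michaelisMenten_minor_det k₁ k₂ x₁ x₃).trans_ne hminor_ne using 1
  congr 1
  ext i j
  fin_cases i <;> fin_cases j <;> rfl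

/-- Completeness of the conservation laws of the truncated Michaelis–Menten system:
the Jacobian of (F, Φ) has rank 3 at every positive steady state, and the 3×3 minor
det D_x(-k₁x₁x₃+k₂x₂, x₁+x₂, x₂+x₃) = -k₂ - k₁x₁ - k₁x₃ ≠ 0. -/
theorem michaelisMenten_conservation_complete
    (k₁ k₂ x₁ x₂ x₃ : ℝ) (hk₁ : 0 < k₁) (hk₂ : 0 < k₂)
    (hx₁ : 0 < x₁) (hx₂ : 0 < x₂) (hx₃ : 0 < x₃)
    (hss : -k₁ * x₁ * x₃ + k₂ * x₂ = 0) :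
    (Matrix.rank
      (![![-k₁ * x₃, k₂, -k₁ * x₁],
         ![k₁ * x₃, -k₂, k₁ * x₁],
         ![-k₁ * x₃, k₂, -k₁ * x₁],
         ![1, 1, 0],
         ![0, 1, 1]] : Matrix (Fin 5) (Fin 3) ℝ) = 3) ∧
    (Matrix.det
      (![![-k₁ * x₃, k₂, -k₁ * x₁],
         ![1, 1, 0],
         ![0, 1, 1]] : Matrix (Fin 3) (Fin 3) ℝ) = -k₂ - k₁ * x₁ - k₁ * x₃) ∧
    (-k₂ - k₁ * x₁ - k₁ * x₃ ≠ 0) :=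
  michaelisMenten_conservation_complete_general k₁ k₂ x₁ x₃ hk₁ hk₂ hx₁ hx₃
end
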